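/- Let p = (p_1, p_2) ∈ ℤ² be a primitive vector and set q = (−p_2, p_1). For a ∈ ℝ², define g_a : ℝ² → ℝ by g_a(ξ) = ∏_{i∈{1,2}: q_i ≥ 0} (e·ξ_i)^{q_i} − e^{⟨a,q⟩} ∏_{i∈{1,2}: q_i ≤ 0} (e·ξ_i)^{−q_i}. Then the following are equivalent: (i) for every a ∈ ℝ², the gradient ∇g_a(ξ) is nonzero at every ξ ∈ (ℝ_{≥0})² with g_a(ξ) = 0; (ii) p or −p belongs to A_{++} ∪ A_{+−}, where A_{++} = {(1, b) : b ∈ ℤ, b ≥ 0} ∪ {(b, 1) : b ∈ ℤ, b ≥ 0} and A_{+−} = {(c_1, c_2) ∈ ℤ² : c_1 ≥ 0, c_2 < 0}. (This computes the standard local model 𝒱_O for n = 2, k = 1: the set of lines ℝp such that D̄(V) is a submanifold with corners near the standard corner.) -/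

import Mathlib

open Finset

/-!
With `E = exp ⟨a, q⟩ > 0` and the monomials `m_k(ξ) = ∏ (e ξ_i)^(k_i)`, the function `g_a` is the
binomial `m_{q⁺} - E m_{q⁻}`, whose exponent vectors have disjoint supports.

If one exponent vector vanishes (`p` has coordinates of opposite signs), Euler's identity
`∑ ξ_i ∂_i m_k = |k| m_k` turns a critical zero into `(|q⁺| - |q⁻|) m_{q⁺}(ξ) = 0`, which is
impossible. If one of them is a coordinate vector `e_i`, then `∂_i g_a` is the constant `e` or
`-E e`. Otherwise both monomials vanish at the origin together with their gradients, so the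
origin is a singular zero. For primitive `p` the first two alternatives are exactly
`±p ∈ A₊₊ ∪ A₊₋`.
-/

namespace StandardCorner

variable {ι : Type*} [Fintype ι]

noncomputable def scaledMonomial (c : ℝ) (k : ι → ℕ) (ξ : ι → ℝ) : ℝ := ∏ i, (c * ξ i) ^ k i

noncomputable def binomial (c E : ℝ) (a b : ι → ℕ) (ξ : ι → ℝ) : ℝ :=
  scaledMonomial c a ξ - E * scaledMonomial c b ξ

lemma scaledMonomial_zero_of_ne_zero (c : ℝ) {k : ι → ℕ} (hk : k ≠ 0) :
    scaledMonomial c k 0 = 0 := by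
  obtain ⟨i, hi⟩ := Function.ne_iff.mp hk
  exact prod_eq_zero (mem_univ i) (by simp [zero_pow hi])

lemma binomial_zero_of_ne_zero (c E : ℝ) {a b : ι → ℕ} (ha : a ≠ 0) (hb : b ≠ 0) :
    binomial c E a b 0 = 0 := by
  simp [binomial, scaledMonomial_zero_of_ne_zero c ha, scaledMonomial_zero_of_ne_zero c hb]

variable [DecidableEq ι]

lemma hasFDerivAt_scaledMonomial (c : ℝ) (k : ι → ℕ) (ξ : ι → ℝ) :
    HasFDerivAt (scaledMonomial c k)
      (∑ i, (∏ j ∈ univ.erase i, (c * ξ j) ^ k j) •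
        ((k i * (c * ξ i) ^ (k i - 1) * c) • (ContinuousLinearMap.proj i : (ι → ℝ) →L[ℝ] ℝ)))
      ξ := by
  refine HasFDerivAt.finsetProd fun i _ => ?_
  have := (((ContinuousLinearMap.proj i : (ι → ℝ) →L[ℝ] ℝ).hasFDerivAt (x := ξ)).const_mul c).pow
    (k i)
  rw [smul_smul, nsmul_eq_mul] at this
  exact this

lemma fderiv_scaledMonomial_single (c : ℝ) (k : ι → ℕ) (ξ : ι → ℝ) (i : ι) :
    fderiv ℝ (scaledMonomial c k) ξ (Pi.single i 1) =
      k i * c * (c * ξ i) ^ (k i - 1) * ∏ j ∈ univ.erase i, (c * ξ j) ^ k j := by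
  rw [(hasFDerivAt_scaledMonomial c k ξ).fderiv, _root_.sum_apply, sum_eq_single i]
  · simp; ring
  · intro j _ hj; simp [hj]
  · simp

lemma fderiv_scaledMonomial_single_of_eq_zero (c : ℝ) {k : ι → ℕ} (ξ : ι → ℝ) {i : ι}
    (hk : k i = 0) : fderiv ℝ (scaledMonomial c k) ξ (Pi.single i 1) = 0 := by
  simp [fderiv_scaledMonomial_single, hk]

lemma fderiv_scaledMonomial_single_single (c : ℝ) (ξ : ι → ℝ) (i : ι) :
    fderiv ℝ (scaledMonomial c (Pi.single i 1)) ξ (Pi.single i 1) = c := by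
  rw [fderiv_scaledMonomial_single, prod_eq_one fun j hj => by
    rw [Pi.single_eq_of_ne (ne_of_mem_erase hj), pow_zero]]
  simp

lemma fderiv_scaledMonomial_single_zero (c : ℝ) {k : ι → ℕ} (hk : ∀ j, k ≠ Pi.single j 1)
    (i : ι) : fderiv ℝ (scaledMonomial c k) 0 (Pi.single i 1) = 0 := by
  rw [fderiv_scaledMonomial_single]
  obtain hi | hi | hi : k i = 0 ∨ k i = 1 ∨ 2 ≤ k i := by omega
  · simp [hi]
  · obtain ⟨j, hj⟩ := Function.ne_iff.mp (hk i)
    have hji : j ≠ i := by rintro rfl; simp [hi] at hj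
    rw [prod_eq_zero (mem_erase.mpr ⟨hji, mem_univ j⟩) (by simp_all)]
    simp
  · simp [zero_pow (by omega : k i - 1 ≠ 0)]

lemma sum_mul_fderiv_scaledMonomial_single (c : ℝ) (k : ι → ℕ) (ξ : ι → ℝ) :
    ∑ i, ξ i * fderiv ℝ (scaledMonomial c k) ξ (Pi.single i 1) =
      (∑ i, k i : ℕ) * scaledMonomial c k ξ := by
  rw [Nat.cast_sum, sum_mul]
  refine sum_congr rfl fun i _ => ?_
  rw [fderiv_scaledMonomial_single, scaledMonomial, ← mul_prod_erase univ _ (mem_univ i)]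
  rcases Nat.eq_zero_or_eq_succ_pred (k i) with hi | hi
  · simp [hi]
  · rw [hi, pow_succ, Nat.succ_sub_one]; push_cast; ring

lemma fderiv_binomial_single (c E : ℝ) (a b : ι → ℕ) (ξ : ι → ℝ) (i : ι) :
    fderiv ℝ (binomial c E a b) ξ (Pi.single i 1) =
      fderiv ℝ (scaledMonomial c a) ξ (Pi.single i 1) -
        E * fderiv ℝ (scaledMonomial c b) ξ (Pi.single i 1) := by
  have ha := hasFDerivAt_scaledMonomial c a ξ
  have hb := hasFDerivAt_scaledMonomial c b ξ
  have hg : HasFDerivAt (binomial c E a b) _ ξ := ha.sub (hb.const_mul E)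
  rw [hg.fderiv, ha.fderiv, hb.fderiv]
  simp

lemma exists_fderiv_binomial_single_ne_zero_of_sum_ne {c E : ℝ} {a b : ι → ℕ} {ξ : ι → ℝ}
    (hmono : scaledMonomial c a ξ ≠ 0) (hdeg : ∑ i, a i ≠ ∑ i, b i)
    (hz : binomial c E a b ξ = 0) :
    ∃ i, fderiv ℝ (binomial c E a b) ξ (Pi.single i 1) ≠ 0 := by
  by_contra! hcrit
  have euler : ∑ i, ξ i * fderiv ℝ (binomial c E a b) ξ (Pi.single i 1) =
      (∑ i, a i : ℕ) * scaledMonomial c a ξ - E * ((∑ i, b i : ℕ) * scaledMonomial c b ξ) := by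
    simp only [fderiv_binomial_single, mul_sub, sum_sub_distrib, mul_left_comm _ E, ← mul_sum,
      sum_mul_fderiv_scaledMonomial_single]
  have hab : scaledMonomial c a ξ = E * scaledMonomial c b ξ := sub_eq_zero.mp hz
  simp only [hcrit, mul_zero, sum_const_zero] at euler
  have : ((∑ i, a i : ℕ) - (∑ i, b i : ℕ) : ℝ) * scaledMonomial c a ξ = 0 := by
    rw [sub_mul]; nth_rw 2 [hab]; linear_combination -euler
  rcases mul_eq_zero.mp this with h | h
  · exact hdeg (by exact_mod_cast sub_eq_zero.mp h)
  · exact hmono h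

lemma exists_fderiv_binomial_single_ne_zero {c E : ℝ} (hc : c ≠ 0) (hE : E ≠ 0) {a b : ι → ℕ}
    (hab : a = 0 ∧ b ≠ 0 ∨ a ≠ 0 ∧ b = 0 ∨
      ∃ i, a = Pi.single i 1 ∧ b i = 0 ∨ b = Pi.single i 1 ∧ a i = 0)
    {ξ : ι → ℝ} (hz : binomial c E a b ξ = 0) :
    ∃ i, fderiv ℝ (binomial c E a b) ξ (Pi.single i 1) ≠ 0 := by
  have sum_ne_zero {k : ι → ℕ} (hk : k ≠ 0) : ∑ i, k i ≠ 0 := by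
    simpa [sum_eq_zero_iff, funext_iff] using hk
  rcases hab with ⟨rfl, hb⟩ | ⟨ha, rfl⟩ | ⟨i, ⟨rfl, hb⟩ | ⟨rfl, ha⟩⟩
  · refine exists_fderiv_binomial_single_ne_zero_of_sum_ne ?_ ?_ hz
    · simp [scaledMonomial]
    · simpa using (sum_ne_zero hb).symm
  · refine exists_fderiv_binomial_single_ne_zero_of_sum_ne ?_ (by simpa using sum_ne_zero ha) hz
    rw [sub_eq_zero.mp hz]
    simpa [scaledMonomial] using hE
  · refine ⟨i, ?_⟩
    simpa [fderiv_binomial_single, fderiv_scaledMonomial_single_single,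
      fderiv_scaledMonomial_single_of_eq_zero _ _ hb] using hc
  · refine ⟨i, ?_⟩
    simpa [fderiv_binomial_single, fderiv_scaledMonomial_single_single,
      fderiv_scaledMonomial_single_of_eq_zero _ _ ha] using ⟨hE, hc⟩

lemma fderiv_binomial_single_zero (c E : ℝ) {a b : ι → ℕ} (ha : ∀ i, a ≠ Pi.single i 1)
    (hb : ∀ i, b ≠ Pi.single i 1) (i : ι) :
    fderiv ℝ (binomial c E a b) 0 (Pi.single i 1) = 0 := by
  simp [fderiv_binomial_single, fderiv_scaledMonomial_single_zero c ha,
    fderiv_scaledMonomial_single_zero c hb]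

/-- `p ∈ A₊₊ ∪ A₊₋`. -/
def IsStandardDirection (p₁ p₂ : ℤ) : Prop :=
  (p₁ = 1 ∧ 0 ≤ p₂) ∨ (p₂ = 1 ∧ 0 ≤ p₁) ∨ (0 ≤ p₁ ∧ p₂ < 0)

lemma exponents_of_isStandardDirection {p₁ p₂ : ℤ}
    (hp : IsStandardDirection p₁ p₂ ∨ IsStandardDirection (-p₁) (-p₂)) :
    let a : Fin 2 → ℕ := fun i => (![-p₂, p₁] i).toNat
    let b : Fin 2 → ℕ := fun i => (-![-p₂, p₁] i).toNat
    a = 0 ∧ b ≠ 0 ∨ a ≠ 0 ∧ b = 0 ∨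
      ∃ i, a = Pi.single i 1 ∧ b i = 0 ∨ b = Pi.single i 1 ∧ a i = 0 := by
  simp only [IsStandardDirection] at hp
  simp [funext_iff, Fin.forall_fin_two, Fin.exists_fin_two, Pi.single_apply]
  omega

lemma exponents_of_not_isStandardDirection {p₁ p₂ : ℤ} (hp : Int.gcd p₁ p₂ = 1)
    (hns : ¬(IsStandardDirection p₁ p₂ ∨ IsStandardDirection (-p₁) (-p₂))) :
    let a : Fin 2 → ℕ := fun i => (![-p₂, p₁] i).toNat
    let b : Fin 2 → ℕ := fun i => (-![-p₂, p₁] i).toNat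
    a ≠ 0 ∧ b ≠ 0 ∧ (∀ i, a ≠ Pi.single i 1) ∧ ∀ i, b ≠ Pi.single i 1 := by
  have h₁ : p₂ = 0 → p₁.natAbs = 1 := by rintro rfl; simpa using hp
  have h₂ : p₁ = 0 → p₂.natAbs = 1 := by rintro rfl; simpa using hp
  simp only [IsStandardDirection] at hns
  simp [funext_iff, Fin.forall_fin_two, Pi.single_apply]
  omega

end StandardCorner

open StandardCorner in
/-- Standard local model for `n = 2`, `k = 1`: for a primitive `p = (p₁, p₂)`
with `q = (−p₂, p₁)` and defining function `g a`, the gradient of `g a` is nonzero at every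
zero of `g a` in `(ℝ_{≥0})²` for every translation `a` if and only if `p` or `−p` lies in
`A_{++} ∪ A_{+−}`. -/
theorem stmt17 (p₁ p₂ : ℤ) (hp : Int.gcd p₁ p₂ = 1)
    (q : Fin 2 → ℤ) (hq : q = ![-p₂, p₁])
    (g : (Fin 2 → ℝ) → (Fin 2 → ℝ) → ℝ)
    (hg : ∀ a ξ, g a ξ =
      (∏ i ∈ univ.filter fun i => 0 ≤ q i, (Real.exp 1 * ξ i) ^ (q i).toNat)
      - Real.exp (∑ i, a i * (q i : ℝ)) *
          ∏ i ∈ univ.filter fun i => q i ≤ 0, (Real.exp 1 * ξ i) ^ (-q i).toNat) :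
    ((∀ (a ξ : Fin 2 → ℝ), (∀ i, 0 ≤ ξ i) → g a ξ = 0 →
        ∃ i, fderiv ℝ (g a) ξ (Pi.single i 1) ≠ 0)
     ↔
     (((p₁ = 1 ∧ 0 ≤ p₂) ∨ (p₂ = 1 ∧ 0 ≤ p₁) ∨ (0 ≤ p₁ ∧ p₂ < 0)) ∨
      ((-p₁ = 1 ∧ 0 ≤ -p₂) ∨ (-p₂ = 1 ∧ 0 ≤ -p₁) ∨ (0 ≤ -p₁ ∧ -p₂ < 0)))) := by
  have hg_binomial : ∀ a, g a = binomial (Real.exp 1) (Real.exp (∑ i, a i * (q i : ℝ)))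
      (fun i => (q i).toNat) (fun i => (-q i).toNat) := fun a => funext fun ξ => by
    rw [hg, binomial, scaledMonomial, scaledMonomial, prod_filter_of_ne, prod_filter_of_ne] <;>
      intro i _ h <;> by_contra hi <;> exact h (by rw [Int.toNat_of_nonpos (by omega), pow_zero])
  simp only [hg_binomial]
  subst hq
  constructor
  · intro hreg
    by_contra hns
    obtain ⟨ha, hb, ha₁, hb₁⟩ := exponents_of_not_isStandardDirection hp hns
    obtain ⟨i, hi⟩ := hreg 0 0 (fun _ => le_rfl) (binomial_zero_of_ne_zero _ _ ha hb)
    exact hi (fderiv_binomial_single_zero _ _ ha₁ hb₁ i)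
  · intro hs a ξ _ hz
    exact exists_fderiv_binomial_single_ne_zero (Real.exp_pos 1).ne' (Real.exp_pos _).ne'
      (exponents_of_isStandardDirection hs) hz
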